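/- With R the directed graph on ℕ defined in the context: if x̄ = (x₀,...,xₘ) and ȳ = (y₀,...,yₘ) form a matching pair of m-cycles, then there is some n such that both x̄ and ȳ are contained in the interval [aₙ, aₙ₊₁). -/

import Mathlib

/-- `a 1 = 0`, `b n = a n + n + 1`, `c n = b n + a n`, `a (n+1) = c n + n + 1`. -/
def a : ℕ → ℕ
  | 0 => 0
  | 1 => 0
  | n + 2 => 2 * a (n + 1) + 2 * (n + 1) + 2

def b (n : ℕ) : ℕ := a n + n + 1

def c (n : ℕ) : ℕ := b n + a n

/-- `x` and `y` are joined by an edge of the bidirectional `(n+1)`-cycle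
`s ↔ s+1 ↔ ⋯ ↔ s+n ↔ s`. -/
def adjCyc (s n x y : ℕ) : Prop :=
  (∃ i, i < n ∧ ((x = s + i ∧ y = s + i + 1) ∨ (y = s + i ∧ x = s + i + 1))) ∨
  (x = s ∧ y = s + n) ∨ (x = s + n ∧ y = s)

/-- The directed graph `R` on `ℕ`: for each `n ≥ 1`, bidirectional cycles on
`{a n, …, a n + n}` and `{c n, …, c n + n}`; a directed edge from `a n` to `c n`;
directed edges from every `y ≥ a (n+1)` to `c n + n`; and for `x, y ∈ [b n, c n)`,
an edge from `x` to `y` iff there is an edge from `x - b n` to `y - b n`. -/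
inductive Edge : ℕ → ℕ → Prop
  | cycA {n x y : ℕ} (h : 1 ≤ n) (hxy : adjCyc (a n) n x y) : Edge x y
  | cycC {n x y : ℕ} (h : 1 ≤ n) (hxy : adjCyc (c n) n x y) : Edge x y
  | ac {n : ℕ} (h : 1 ≤ n) : Edge (a n) (c n)
  | down {n y : ℕ} (h : 1 ≤ n) (hy : a (n + 1) ≤ y) : Edge y (c n + n)
  | copy {n x y : ℕ} (h : 1 ≤ n) (hx : b n ≤ x) (hx' : x < c n) (hy : b n ≤ y)
      (hy' : y < c n) (he : Edge (x - b n) (y - b n)) : Edge x y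

/-- `y₀ < y₁ < ⋯ < yₘ` form an `m`-cycle (`m ≥ 1`): there is a bidirectional cycle
`y₀ ↔ y₁ ↔ ⋯ ↔ yₘ ↔ y₀` and no other edges among the `yᵢ`. -/
def IsMCycle (m : ℕ) (y : Fin (m + 1) → ℕ) : Prop :=
  1 ≤ m ∧ StrictMono y ∧
    ∀ i j : Fin (m + 1), Edge (y i) (y j) ↔
      ((i : ℕ) + 1 = (j : ℕ) ∨ (j : ℕ) + 1 = (i : ℕ) ∨
        ((i : ℕ) = 0 ∧ (j : ℕ) = m) ∨ ((j : ℕ) = 0 ∧ (i : ℕ) = m))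

/-- Two `m`-cycles `x̄`, `ȳ` form a matching pair if there is a (one-directional)
edge from `x₀` to `y₀`. -/
def MatchingPair (m : ℕ) (x y : Fin (m + 1) → ℕ) : Prop :=
  IsMCycle m x ∧ IsMCycle m y ∧ Edge (x 0) (y 0) ∧ ¬ Edge (y 0) (x 0)

/-!
Every edge of `R` either stays inside one block `[a k, a (k+1))` or is a downward edge ending
at the last element `c k + k = a (k+1) - 1` of block `k`. Hence no edge climbs over any `a n`,
edges in both directions preserve blocks, and each `m`-cycle lies in a single block. The edge
`x₀ → y₀` cannot be a downward one, since `y₁ > y₀` lies in the block of `y₀`, so `y₀` is not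
the last element of its block; thus `x₀` and `y₀` share a block.
-/

def block (k : ℕ) : Set ℕ := Set.Ico (a k) (a (k + 1))

lemma a_succ_eq {n : ℕ} (hn : 1 ≤ n) : a (n + 1) = c n + n + 1 := by
  obtain ⟨n, rfl⟩ := Nat.exists_eq_add_of_le' hn
  simp only [a, c, b]
  ring

lemma monotone_a : Monotone a := by
  refine monotone_nat_of_le_succ fun n => ?_
  match n with
  | 0 => exact le_rfl
  | n + 1 => simp only [a]; omega

lemma le_a_succ (n : ℕ) : n ≤ a (n + 1) := by
  induction n with
  | zero => exact Nat.zero_le _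
  | succ n _ => simp only [a]; omega

lemma succ_le_of_mem_block_of_lt_a {k n z : ℕ} (hz : z ∈ block k) (h : z < a n) : k + 1 ≤ n := by
  by_contra! hnk
  have := monotone_a (Nat.le_of_lt_succ hnk)
  have := hz.1
  omega

lemma block_unique {j k z : ℕ} (hj : z ∈ block j) (hk : z ∈ block k) : j = k := by
  have := succ_le_of_mem_block_of_lt_a hj hk.2
  have := succ_le_of_mem_block_of_lt_a hk hj.2
  omega

lemma exists_mem_block (z : ℕ) : ∃ k, 1 ≤ k ∧ z ∈ block k := by
  have hex : ∃ n, z < a (n + 2) := ⟨z, (Nat.lt_succ_self z).trans_le (le_a_succ (z + 1))⟩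
  refine ⟨Nat.find hex + 1, by omega, ?_, Nat.find_spec hex⟩
  rcases h : Nat.find hex with _ | n
  · exact Nat.zero_le _
  · exact not_lt.mp (Nat.find_min hex (m := n) (by omega))

lemma mem_block_of_le {n z : ℕ} (hn : 1 ≤ n) (h₁ : a n ≤ z) (h₂ : z ≤ c n + n) :
    z ∈ block n :=
  ⟨h₁, by rw [a_succ_eq hn]; omega⟩

lemma adjCyc_bounds {s n x y : ℕ} (h : adjCyc s n x y) :
    s ≤ x ∧ x ≤ s + n ∧ s ≤ y ∧ y ≤ s + n := by
  rcases h with ⟨i, hi, h | h⟩ | h | h <;> omega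

lemma Edge.sameBlock_or_down {u v : ℕ} (h : Edge u v) :
    (∃ k, u ∈ block k ∧ v ∈ block k) ∨ ∃ k, a (k + 1) ≤ u ∧ v + 1 = a (k + 1) := by
  cases h with
  | @cycA n _ _ hn hadj =>
    have := adjCyc_bounds hadj
    exact .inl ⟨n, mem_block_of_le hn (by omega) (by simp only [c, b]; omega),
      mem_block_of_le hn (by omega) (by simp only [c, b]; omega)⟩
  | @cycC n _ _ hn hadj =>
    have := adjCyc_bounds hadj
    exact .inl ⟨n, mem_block_of_le hn (by simp only [c, b] at *; omega) (by omega),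
      mem_block_of_le hn (by simp only [c, b] at *; omega) (by omega)⟩
  | @ac n hn =>
    exact .inl ⟨n, mem_block_of_le hn le_rfl (by simp only [c, b]; omega),
      mem_block_of_le hn (by simp only [c, b]; omega) (by omega)⟩
  | @down n _ hn hu => exact .inr ⟨n, hu, (a_succ_eq hn).symm⟩
  | @copy n _ _ hn hu hu' hv hv' _ =>
    simp only [b] at hu hv
    exact .inl ⟨n, mem_block_of_le hn (by omega) (by omega),
      mem_block_of_le hn (by omega) (by omega)⟩

lemma Edge.lt_a_of_lt_a {u v n : ℕ} (h : Edge u v) (hu : u < a n) : v < a n := by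
  rcases h.sameBlock_or_down with ⟨k, huk, hvk⟩ | ⟨k, hku, hv⟩
  · exact lt_of_lt_of_le hvk.2 (monotone_a (succ_le_of_mem_block_of_lt_a huk hu))
  · omega

namespace IsMCycle

variable {m : ℕ} {x : Fin (m + 1) → ℕ}

lemma lt_a_iff (hx : IsMCycle m x) (n : ℕ) (i : Fin (m + 1)) : x i < a n ↔ x 0 < a n := by
  induction i using Fin.induction with
  | zero => rfl
  | succ i ih =>
    have hfwd : Edge (x i.castSucc) (x i.succ) := (hx.2.2 _ _).mpr (.inl (by simp))
    have hbwd : Edge (x i.succ) (x i.castSucc) := (hx.2.2 _ _).mpr (.inr (.inl (by simp)))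
    rw [← ih]
    exact ⟨hbwd.lt_a_of_lt_a, hfwd.lt_a_of_lt_a⟩

lemma mem_block (hx : IsMCycle m x) {k : ℕ} (hk : x 0 ∈ block k) (i : Fin (m + 1)) :
    x i ∈ block k :=
  ⟨le_of_not_gt fun hi => hk.1.not_gt ((hx.lt_a_iff k i).mp hi), (hx.lt_a_iff (k + 1) i).mpr hk.2⟩

lemma zero_add_one_ne_a (hx : IsMCycle m x) (n : ℕ) : x 0 + 1 ≠ a n := by
  intro h
  have h1 : 1 < m + 1 := by have := hx.1; omega
  have h01 : x 0 < x ⟨1, h1⟩ := hx.2.1 (Fin.lt_def.mpr (by simp))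
  have := (hx.lt_a_iff n ⟨1, h1⟩).mpr (by omega)
  omega

end IsMCycle

/-- If `x̄` and `ȳ` form a matching pair of `m`-cycles, then both are contained
in the interval `[a n, a (n+1))` for some `n`. -/
theorem matchingPair_same_block (m : ℕ) (x y : Fin (m + 1) → ℕ)
    (h : MatchingPair m x y) :
    ∃ n : ℕ, 1 ≤ n ∧ (∀ i : Fin (m + 1), a n ≤ x i ∧ x i < a (n + 1)) ∧
      (∀ i : Fin (m + 1), a n ≤ y i ∧ y i < a (n + 1)) := by
  obtain ⟨hx, hy, hxy, -⟩ := h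
  obtain ⟨k, hk, hx0⟩ := exists_mem_block (x 0)
  have hy0 : y 0 ∈ block k := by
    rcases hxy.sameBlock_or_down with ⟨j, hxj, hyj⟩ | ⟨j, -, htop⟩
    · rwa [block_unique hx0 hxj]
    · exact absurd htop (hy.zero_add_one_ne_a (j + 1))
  exact ⟨k, hk, hx.mem_block hx0, hy.mem_block hy0⟩
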